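/- Let s = (α, g, β) and e = (γ, 1, γ) be nonzero elements of S_{G,E}. Then e ≤ s in the natural partial order of S_{G,E} (equivalently, s·e = e) if and only if: (1) α = β; (2) γ = ατ for some τ ∈ E*; and (3) τ is strongly fixed by g. -/
import Mathlib


/-- Finite paths in a directed graph: `Pth.nil x` is the length-zero path at the
vertex `x`, and `Pth.cons e p` is the path whose first edge is `e`, followed by `p`. -/
inductive Pth (V : Type) (Ed : Type) : Type where
  | nil : V → Pth V Ed
  | cons : Ed → Pth V Ed → Pth V Ed

/-- A self-similar graph `(G, E, φ)`: a group `G` acting on a directed graph `E`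
(with vertex set `V`, edge set `Ed`, range `r` and source `d`) by graph
automorphisms, together with a one-cocycle `φ : G × E¹ → G` for the action on
edges, satisfying `φ(g,e)·x = g·x` for all vertices `x`. -/
structure SelfSimGraph (G V Ed : Type) [Group G] : Type where
  r : Ed → V
  d : Ed → V
  actV : G → V → V
  actE : G → Ed → Ed
  actV_one : ∀ x, actV 1 x = x
  actV_mul : ∀ g h x, actV (g * h) x = actV g (actV h x)
  actE_one : ∀ e, actE 1 e = e
  actE_mul : ∀ g h e, actE (g * h) e = actE g (actE h e)
  r_act : ∀ g e, r (actE g e) = actV g (r e)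
  d_act : ∀ g e, d (actE g e) = actV g (d e)
  phi : G → Ed → G
  phi_cocycle : ∀ g h e, phi (g * h) e = phi g (actE h e) * phi h e
  phi_vertex : ∀ g e x, actV (phi g e) x = actV g x

variable {G V Ed : Type} [Group G]

/-- The range `r(α)` of a finite path. -/
def rngP (S : SelfSimGraph G V Ed) : Pth V Ed → V
  | Pth.nil x => x
  | Pth.cons e _ => S.r e

/-- The source `d(α)` of a finite path. -/
def srcP (S : SelfSimGraph G V Ed) : Pth V Ed → V
  | Pth.nil x => x
  | Pth.cons _ p => srcP S p

/-- Well-formedness of a finite path: consecutive edges match, `d(αᵢ) = r(αᵢ₊₁)`. -/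
def WFP (S : SelfSimGraph G V Ed) : Pth V Ed → Prop
  | Pth.nil _ => True
  | Pth.cons e p => S.d e = rngP S p ∧ WFP S p

/-- The length of a finite path. -/
def lenP : Pth V Ed → ℕ
  | Pth.nil _ => 0
  | Pth.cons _ p => lenP p + 1

/-- Concatenation `αβ` of finite paths (meaningful when `d(α) = r(β)`). -/
def compP : Pth V Ed → Pth V Ed → Pth V Ed
  | Pth.nil _, q => q
  | Pth.cons e p, q => Pth.cons e (compP p q)

/-- The action of `G` extended to finite paths:
`g·x = g·x` on vertices and `g·(eα) = (g·e)(φ(g,e)·α)`. -/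
def actP (S : SelfSimGraph G V Ed) : G → Pth V Ed → Pth V Ed
  | g, Pth.nil x => Pth.nil (S.actV g x)
  | g, Pth.cons e p => Pth.cons (S.actE g e) (actP S (S.phi g e) p)

/-- The cocycle extended to finite paths:
`φ(g,x) = g` on vertices and `φ(g, eα) = φ(φ(g,e), α)`. -/
def phiP (S : SelfSimGraph G V Ed) : G → Pth V Ed → G
  | g, Pth.nil _ => g
  | g, Pth.cons e p => phiP S (S.phi g e) p

/-- A path `τ` is strongly fixed by `g` if `g·τ = τ` and `φ(g,τ) = 1`. -/
def StronglyFixed (S : SelfSimGraph G V Ed) (g : G) (τ : Pth V Ed) : Prop :=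
  WFP S τ ∧ actP S g τ = τ ∧ phiP S g τ = 1

/-- `(G,E,φ)` is pseudo free if `g·e = e` and `φ(g,e) = 1` imply `g = 1`. -/
def PseudoFree (S : SelfSimGraph G V Ed) : Prop :=
  ∀ (g : G) (e : Ed), S.actE g e = e → S.phi g e = 1 → g = 1

/-- `p` is a prefix (initial segment) of `q`: `q = pε` for some path `ε`. -/
def IsPrefixP (S : SelfSimGraph G V Ed) (p q : Pth V Ed) : Prop :=
  ∃ ε, WFP S ε ∧ rngP S ε = srcP S p ∧ compP p ε = q

/-- The set `M_g` of minimal strongly fixed paths for `g`: strongly fixed paths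
none of whose proper prefixes is strongly fixed. -/
def MinSF (S : SelfSimGraph G V Ed) (g : G) : Set (Pth V Ed) :=
  {μ | StronglyFixed S g μ ∧ ∀ p, IsPrefixP S p μ → p ≠ μ → ¬StronglyFixed S g p}

/-- Well-formedness of an infinite path, viewed as a sequence of edges:
`d(ξᵢ) = r(ξᵢ₊₁)`. -/
def InfWF (S : SelfSimGraph G V Ed) (ξ : ℕ → Ed) : Prop :=
  ∀ i, S.d (ξ i) = S.r (ξ (i + 1))

/-- The range `r(ξ)` of an infinite path. -/
def rngInf (S : SelfSimGraph G V Ed) (ξ : ℕ → Ed) : V := S.r (ξ 0)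

/-- `takeP S ξ n` is the finite path `ξ|ₙ = ξ₁⋯ξₙ` (with `ξ|₀ = r(ξ₁)`). -/
def takeP (S : SelfSimGraph G V Ed) : (ℕ → Ed) → ℕ → Pth V Ed
  | ξ, 0 => Pth.nil (S.r (ξ 0))
  | ξ, n + 1 => Pth.cons (ξ 0) (takeP S (fun i => ξ (i + 1)) n)

/-- Membership of an infinite path in the cylinder `Z(α)`:
the initial segment of `ξ` of length `|α|` equals `α`. -/
def InZ (S : SelfSimGraph G V Ed) (α : Pth V Ed) (ξ : ℕ → Ed) : Prop :=
  takeP S ξ (lenP α) = α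

/-- The infinite path `αξ` obtained by prepending a finite path to an infinite one. -/
def prepSeq : Pth V Ed → (ℕ → Ed) → ℕ → Ed
  | Pth.nil _, ξ, n => ξ n
  | Pth.cons e _, _, 0 => e
  | Pth.cons _ p, ξ, n + 1 => prepSeq p ξ n

/-- Dropping the first `k` edges of an infinite path. -/
def dropSeq (k : ℕ) (ξ : ℕ → Ed) : ℕ → Ed := fun n => ξ (n + k)

/-- The space `E^∞` of infinite paths. -/
def InfPath (S : SelfSimGraph G V Ed) : Type := {ξ : ℕ → Ed // InfWF S ξ}

/-- The topology of `E^∞`: the subspace topology induced from the product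
topology on `(E¹)^ℕ`, `E¹` being discrete.  Its basis consists of the
cylinders `Z(α)`. -/
def infTop (S : SelfSimGraph G V Ed) : TopologicalSpace (InfPath S) :=
  TopologicalSpace.induced (fun ξ => ξ.1)
    (@Pi.topologicalSpace ℕ (fun _ => Ed) (fun _ => ⊥))

/-- Specification of the (unique) action of `G` on `E^∞`: `(g·ξ)|ₙ = g·(ξ|ₙ)`. -/
def ActSpec (S : SelfSimGraph G V Ed) (act : G → (ℕ → Ed) → ℕ → Ed) : Prop :=
  ∀ (g : G) (ξ : ℕ → Ed) (n : ℕ), takeP S (act g ξ) n = actP S g (takeP S ξ n)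

/-- The action of a triple `s = (α, g, β) ∈ S_{G,E}` on `E^∞`: it sends
`βξ ∈ Z(β)` to `α(g·ξ)`. -/
def sActSeq (S : SelfSimGraph G V Ed) (act : G → (ℕ → Ed) → ℕ → Ed)
    (α : Pth V Ed) (g : G) (β : Pth V Ed) (ξ : ℕ → Ed) : ℕ → Ed :=
  prepSeq α (act g (dropSeq (lenP β) ξ))

/-- The set of fixed points in `E^∞` of the element `s = (α, g, β)` of `S_{G,E}`. -/
def FixSet (S : SelfSimGraph G V Ed) (act : G → (ℕ → Ed) → ℕ → Ed)
    (α : Pth V Ed) (g : G) (β : Pth V Ed) : Set (InfPath S) :=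
  {η | InZ S β η.1 ∧ sActSeq S act α g β η.1 = η.1}

/-- A vertex `x` is simple if `r⁻¹(x)` is a singleton. -/
def SimpleVtx (S : SelfSimGraph G V Ed) (x : V) : Prop := ∃! e : Ed, S.r e = x

/-- A path `γ = γ₁⋯γₙ` has no entry if `d(γᵢ)` is simple for every `i`. -/
def NoEntry (S : SelfSimGraph G V Ed) : Pth V Ed → Prop
  | Pth.nil _ => True
  | Pth.cons e p => SimpleVtx S (S.d e) ∧ NoEntry S p

/-- A circuit: a path `γ` of nonzero length with `d(γ) = r(γ)`. -/
def Circuit (S : SelfSimGraph G V Ed) (γ : Pth V Ed) : Prop :=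
  WFP S γ ∧ 1 ≤ lenP γ ∧ srcP S γ = rngP S γ

/-- A `G`-circuit: a pair `(g,γ)` with `γ` of nonzero length and `d(γ) = g·r(γ)`. -/
def GCircuit (S : SelfSimGraph G V Ed) (g : G) (γ : Pth V Ed) : Prop :=
  WFP S γ ∧ 1 ≤ lenP γ ∧ srcP S γ = S.actV g (rngP S γ)

/-- `g` is slack at `x` if all sufficiently long paths with range `x` are
strongly fixed by `g`. -/
def SlackAt (S : SelfSimGraph G V Ed) (g : G) (x : V) : Prop :=
  ∃ n : ℕ, ∀ γ, WFP S γ → rngP S γ = x → n ≤ lenP γ → StronglyFixed S g γ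

/-- The sequence `(γⁿ, gₙ)` attached to a `G`-circuit `(g, γ)`:
`γ¹ = γ`, `g₁ = g`, `γⁿ⁺¹ = gₙ·γⁿ`, `gₙ₊₁ = φ(gₙ, γⁿ)` (indexed from `0`). -/
def circIter (S : SelfSimGraph G V Ed) (g : G) (γ : Pth V Ed) : ℕ → Pth V Ed × G
  | 0 => (γ, g)
  | n + 1 =>
      (actP S (circIter S g γ n).2 (circIter S g γ n).1,
       phiP S (circIter S g γ n).2 (circIter S g γ n).1)

/-- The finite concatenation `γ¹γ²⋯γⁿ`. -/
def circConcat (S : SelfSimGraph G V Ed) (g : G) (γ : Pth V Ed) : ℕ → Pth V Ed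
  | 0 => Pth.nil (rngP S γ)
  | n + 1 => compP (circConcat S g γ n) (circIter S g γ n).1

/-- `ξ` is the infinite concatenation `ξ(g,γ) = γ¹γ²γ³⋯`: it is an infinite path
whose initial segments are the finite concatenations `γ¹⋯γⁿ`. -/
def IsCircPath (S : SelfSimGraph G V Ed) (g : G) (γ : Pth V Ed) (ξ : ℕ → Ed) : Prop :=
  InfWF S ξ ∧ ∀ n, takeP S ξ (lenP (circConcat S g γ n)) = circConcat S g γ n

/-- `x ⇀ y`: there is a finite path with source `x` and range `y`. -/
def RelPath (S : SelfSimGraph G V Ed) (x y : V) : Prop :=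
  ∃ α, WFP S α ∧ srcP S α = x ∧ rngP S α = y

/-- `x ∼ y`: `x` and `y` are in the same `G`-orbit. -/
def RelOrb (S : SelfSimGraph G V Ed) (x y : V) : Prop :=
  ∃ g : G, S.actV g x = y

/-- `x ≫ y`: there is a vertex `u` with `x ⇀ u ∼ y`. -/
def RelGG (S : SelfSimGraph G V Ed) (x y : V) : Prop :=
  ∃ u, RelPath S x u ∧ RelOrb S u y

/-- A nonzero element `(α, g, β)` of `S_{G,E}`: `α, β ∈ E*`, `g ∈ G`, with
`d(α) = g·d(β)`. -/
def SGETriple (S : SelfSimGraph G V Ed) : Type :=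
  {t : Pth V Ed × G × Pth V Ed //
    WFP S t.1 ∧ WFP S t.2.2 ∧ srcP S t.1 = S.actV t.2.1 (srcP S t.2.2)}

/-- The inverse semigroup `S_{G,E}` (as a set): the triples together with `0 = none`. -/
def SGE (S : SelfSimGraph G V Ed) : Type := Option (SGETriple S)

/-- Forget the membership proofs. -/
def sgeToRaw (S : SelfSimGraph G V Ed) : SGE S → Option (Pth V Ed × G × Pth V Ed) :=
  Option.map Subtype.val

/-- The adjoint: `(α, g, β)* = (β, g⁻¹, α)`, `0* = 0`. -/
def starSGE (S : SelfSimGraph G V Ed) : SGE S → SGE S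
  | none => none
  | some s =>
      some ⟨(s.1.2.2, s.1.2.1⁻¹, s.1.1),
        ⟨s.2.2.1, s.2.1, by
          rw [s.2.2.2, ← S.actV_mul, inv_mul_cancel, S.actV_one]⟩⟩

/-- The idempotent `f_α = (α, 1, α)`. -/
def fIdem (S : SelfSimGraph G V Ed) (α : Pth V Ed) (h : WFP S α) : SGE S :=
  some ⟨(α, 1, α), ⟨h, h, by rw [S.actV_one]⟩⟩

/-- Specification of the multiplication of `S_{G,E}`:
`0` is absorbing; `(α,g,β)(γ,h,δ) = (α(g·ε), φ(g,ε)h, δ)` if `γ = βε`;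
`(α,g,β)(γ,h,δ) = (α, gφ(h⁻¹,ε)⁻¹, δ(h⁻¹·ε))` if `β = γε`; `0` otherwise. -/
def MulSpec (S : SelfSimGraph G V Ed) (mul : SGE S → SGE S → SGE S) : Prop :=
  (∀ t, mul none t = none) ∧
  (∀ s, mul s none = none) ∧
  (∀ (s t : SGETriple S) (ε : Pth V Ed),
     WFP S ε → rngP S ε = srcP S s.1.2.2 → t.1.1 = compP s.1.2.2 ε →
       sgeToRaw S (mul (some s) (some t)) =
         some (compP s.1.1 (actP S s.1.2.1 ε), phiP S s.1.2.1 ε * t.1.2.1, t.1.2.2)) ∧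
  (∀ (s t : SGETriple S) (ε : Pth V Ed),
     WFP S ε → rngP S ε = srcP S t.1.1 → s.1.2.2 = compP t.1.1 ε →
       sgeToRaw S (mul (some s) (some t)) =
         some (s.1.1, s.1.2.1 * (phiP S t.1.2.1⁻¹ ε)⁻¹,
               compP t.1.2.2 (actP S t.1.2.1⁻¹ ε))) ∧
  (∀ (s t : SGETriple S),
     (¬∃ ε, WFP S ε ∧ rngP S ε = srcP S s.1.2.2 ∧ t.1.1 = compP s.1.2.2 ε) →
     (¬∃ ε, WFP S ε ∧ rngP S ε = srcP S t.1.1 ∧ s.1.2.2 = compP t.1.1 ε) →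
       mul (some s) (some t) = none)

/-- Topological freeness of the standard action of `S_{G,E}` on `E^∞`: for every
nonzero `s = (α, g, β)`, every interior fixed point `ζ` of `s` satisfies `α = β`
and `ζ ∈ Z(ατ)` for some `τ` strongly fixed by `g`. -/
def TopFree (S : SelfSimGraph G V Ed) (act : G → (ℕ → Ed) → ℕ → Ed) : Prop :=
  ∀ (α : Pth V Ed) (g : G) (β : Pth V Ed),
    WFP S α → WFP S β → srcP S α = S.actV g (srcP S β) →
    ∀ ζ : InfPath S, ζ ∈ @interior (InfPath S) (infTop S) (FixSet S act α g β) →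
      α = β ∧ ∃ τ : Pth V Ed, WFP S τ ∧ rngP S τ = srcP S α ∧
        StronglyFixed S g τ ∧ InZ S (compP α τ) ζ.1

section Aux
variable {G V Ed : Type} [Group G] (S : SelfSimGraph G V Ed)

lemma phi_one' (e : Ed) : S.phi 1 e = 1 := by
  have h := S.phi_cocycle 1 1 e
  rw [one_mul, S.actE_one] at h
  have h2 : S.phi 1 e * 1 = S.phi 1 e * S.phi 1 e := by rw [mul_one]; exact h
  exact (mul_left_cancel h2).symm

lemma actP_one' (p : Pth V Ed) : actP S 1 p = p := by
  induction p with
  | nil x => simp [actP, S.actV_one]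
  | cons e p ih => simp [actP, S.actE_one, phi_one', ih]

lemma phiP_one' (p : Pth V Ed) : phiP S 1 p = 1 := by
  induction p with
  | nil x => rfl
  | cons e p ih => simp [phiP, phi_one', ih]

lemma lenP_compP (p q : Pth V Ed) : lenP (compP p q) = lenP p + lenP q := by
  induction p with
  | nil x => simp [compP, lenP]
  | cons e p ih => simp [compP, lenP, ih]; omega

lemma lenP_actP (g : G) (p : Pth V Ed) : lenP (actP S g p) = lenP p := by
  induction p generalizing g with
  | nil x => rfl
  | cons e p ih => simp [actP, lenP, ih]

lemma rngP_actP (g : G) (p : Pth V Ed) : rngP S (actP S g p) = S.actV g (rngP S p) := by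
  cases p with
  | nil x => rfl
  | cons e p => simp [actP, rngP, S.r_act]

lemma srcP_compP (p q : Pth V Ed) : srcP S (compP p q) = srcP S q := by
  induction p with
  | nil x => rfl
  | cons e p ih => simpa [compP, srcP] using ih

lemma compP_nil_src (p : Pth V Ed) : compP p (Pth.nil (srcP S p)) = p := by
  induction p with
  | nil x => rfl
  | cons e p ih => simpa [compP, srcP] using ih

lemma comp_inj_right (p p' q q' : Pth V Ed) (hl : lenP p = lenP p')
    (h : compP p q = compP p' q') : q = q' := by
  induction p generalizing p' with
  | nil x => cases p' with
    | nil y => exact h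
    | cons e r => simp [lenP] at hl
  | cons e p ih => cases p' with
    | nil y => simp [lenP] at hl
    | cons f r =>
      simp only [compP, Pth.cons.injEq] at h
      exact ih r (by simpa [lenP] using hl) h.2

lemma comp_inj_left (p p' q q' : Pth V Ed) (hl : lenP p = lenP p')
    (hs : srcP S p = srcP S p') (h : compP p q = compP p' q') : p = p' := by
  induction p generalizing p' with
  | nil x => cases p' with
    | nil y => simpa [srcP] using hs
    | cons e r => simp [lenP] at hl
  | cons e p ih => cases p' with
    | nil y => simp [lenP] at hl
    | cons f r =>
      simp only [compP, Pth.cons.injEq] at h ⊢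
      exact ⟨h.1, ih r (by simpa [lenP] using hl) (by simpa [srcP] using hs) h.2⟩

lemma nil_of_len_zero (p : Pth V Ed) (h : lenP p = 0) : p = Pth.nil (srcP S p) := by
  cases p with
  | nil x => rfl
  | cons e r => simp [lenP] at h

lemma sgeToRaw_inj : Function.Injective (sgeToRaw S) :=
  Option.map_injective Subtype.val_injective

end Aux

/-- For nonzero `s = (α, g, β)` and `e = (γ, 1, γ)` in `S_{G,E}`, one has
`e ≤ s` (equivalently `s·e = e`) if and only if `α = β`, `γ = ατ` for some `τ`,
and `τ` is strongly fixed by `g`. -/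
theorem statement6 {G V Ed : Type} [Group G] [Fintype V] [Fintype Ed]
    (S : SelfSimGraph G V Ed) (hNoSources : ∀ x : V, ∃ e : Ed, S.r e = x)
    (mul : SGE S → SGE S → SGE S) (hmul : MulSpec S mul)
    (α β γ : Pth V Ed) (g : G)
    (hα : WFP S α) (hβ : WFP S β) (hγ : WFP S γ)
    (hmem : srcP S α = S.actV g (srcP S β)) :
    mul (some ⟨(α, g, β), ⟨hα, hβ, hmem⟩⟩) (fIdem S γ hγ) = fIdem S γ hγ ↔
      (α = β ∧ ∃ τ : Pth V Ed, WFP S τ ∧ rngP S τ = srcP S α ∧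
        γ = compP α τ ∧ StronglyFixed S g τ) := by
  have hidem : WFP S γ ∧ WFP S γ ∧ srcP S γ = S.actV 1 (srcP S γ) :=
    ⟨hγ, hγ, by rw [S.actV_one]⟩
  have hraw : sgeToRaw S (fIdem S γ hγ) = some (γ, 1, γ) := rfl
  constructor
  · intro h
    by_cases hA : ∃ ε, WFP S ε ∧ rngP S ε = srcP S β ∧ γ = compP β ε
    · obtain ⟨ε, hWε, hrε, hcε⟩ := hA
      have h3 := hmul.2.2.1 ⟨(α, g, β), ⟨hα, hβ, hmem⟩⟩ ⟨(γ, 1, γ), hidem⟩ ε hWε hrε hcε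
      rw [show (some ⟨(γ,1,γ), hidem⟩ : SGE S) = fIdem S γ hγ from rfl, h, hraw] at h3
      simp only [Option.some.injEq, Prod.mk.injEq] at h3
      obtain ⟨e1, e2, -⟩ := h3
      have e2' : phiP S g ε = 1 := by
        have := e2.symm; rwa [mul_one] at this
      have hlen : lenP α = lenP β := by
        have := congrArg lenP (e1.symm.trans hcε)
        rw [lenP_compP, lenP_compP, lenP_actP] at this
        omega
      have hq : actP S g ε = ε :=
        comp_inj_right α β _ _ hlen (e1.symm.trans hcε)
      have hrτ : rngP S ε = srcP S α := by
        rw [← hq, rngP_actP, hrε, ← hmem]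
      have hsrc : srcP S α = srcP S β := hrτ.symm.trans hrε
      have hab : α = β := comp_inj_left S α β _ _ hlen hsrc (e1.symm.trans hcε)
      exact ⟨hab, ε, hWε, hrτ, by rw [e1, hq], hWε, hq, e2'⟩
    · by_cases hB : ∃ ε, WFP S ε ∧ rngP S ε = srcP S γ ∧ β = compP γ ε
      · obtain ⟨ε, hWε, hrε, hcε⟩ := hB
        have h4 := hmul.2.2.2.1 ⟨(α, g, β), ⟨hα, hβ, hmem⟩⟩ ⟨(γ, 1, γ), hidem⟩ ε hWε hrε hcε
        rw [show (some ⟨(γ,1,γ), hidem⟩ : SGE S) = fIdem S γ hγ from rfl, h, hraw,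
          inv_one, phiP_one', actP_one', inv_one, mul_one] at h4
        simp only [Option.some.injEq, Prod.mk.injEq] at h4
        obtain ⟨e1, e2, e3⟩ := h4
        have hlε : lenP ε = 0 := by
          have := congrArg lenP e3
          rw [lenP_compP] at this; omega
        have hεnil : ε = Pth.nil (srcP S γ) := by
          rw [nil_of_len_zero S ε hlε, ← hrε]
          cases ε with
          | nil x => rfl
          | cons e r => simp [lenP] at hlε
        have hβγ : β = γ := by
          rw [hcε, hεnil, compP_nil_src]
        have e2g : g = 1 := e2.symm
        refine ⟨e1.symm.trans hβγ.symm, Pth.nil (srcP S α), trivial, rfl, ?_, trivial, ?_, ?_⟩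
        · rw [e1]; exact (compP_nil_src S α).symm
        · rw [e2g]; exact actP_one' S _
        · rw [e2g]; rfl
      · exact absurd (h.symm ▸ hmul.2.2.2.2 _ _ hA hB) (by simp [fIdem])
  · rintro ⟨hab, τ, hWτ, hrτ, hcτ, hWτ', hact, hphi⟩
    subst hab
    have h3 := hmul.2.2.1 ⟨(α, g, α), ⟨hα, hβ, hmem⟩⟩ ⟨(γ, 1, γ), hidem⟩ τ hWτ hrτ hcτ
    rw [hact, hphi, one_mul, ← hcτ] at h3
    exact sgeToRaw_inj S (h3.trans hraw.symm)
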